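/- arXiv:2210.09703 — 2 statements merged into one kernel-verified Lean document; each statement's English description precedes it below -/
import Mathlib

section
/- Let W be a regular reachability objective over C and M a finite chromatic memory structure. Then M suffices to play optimally for W in all arenas (of any cardinality) if and only if W is M-strongly-monotone and M-progress-consistent. -/
set_option autoImplicit false

namespace RegularMemory

/-- Concatenation of a finite word with an infinite word. -/
def wcat {C : Type} (w : List C) (x : ℕ → C) : ℕ → C := fun n =>
  if h : n < w.length then w.get ⟨n, h⟩ else x (n - w.length)

/-- The infinite word `w^ω` (junk value if `w` is empty). -/
noncomputable def wpow {C : Type} [Nonempty C] : List C → ℕ → C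
  | [] => fun _ => Classical.arbitrary C
  | (a :: l) => fun n => (a :: l).get ⟨n % (a :: l).length, Nat.mod_lt n (Nat.succ_pos _)⟩

/-- Winning continuations `w⁻¹W` of the finite word `w` for the objective `W`. -/
def contAfter {C : Type} (W : Set (ℕ → C)) (w : List C) : Set (ℕ → C) :=
  {x | wcat w x ∈ W}

/-- Prefix preorder `w₁ ⪯_W w₂`. -/
def prefLe {C : Type} (W : Set (ℕ → C)) (w₁ w₂ : List C) : Prop :=
  contAfter W w₁ ⊆ contAfter W w₂

/-- Strict prefix relation `w₁ ≺_W w₂`. -/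
def prefLt {C : Type} (W : Set (ℕ → C)) (w₁ w₂ : List C) : Prop :=
  prefLe W w₁ w₂ ∧ ¬ prefLe W w₂ w₁

/-- Comparability for the prefix preorder. -/
def PrefComparable {C : Type} (W : Set (ℕ → C)) (w₁ w₂ : List C) : Prop :=
  prefLe W w₁ w₂ ∨ prefLe W w₂ w₁

/-- The general reachability objective derived from `A`: infinite words with a prefix in `A`. -/
def ReachObj {C : Type} (A : Set (List C)) : Set (ℕ → C) :=
  {x | ∃ n : ℕ, (List.ofFn fun i : Fin n => x i) ∈ A}

/-- The general safety objective derived from `A`. -/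
def SafeObj {C : Type} (A : Set (List C)) : Set (ℕ → C) :=
  (ReachObj A)ᶜ

/-- The prefix preorder of `W` has finitely many equivalence classes. -/
def FinClasses {C : Type} (W : Set (ℕ → C)) : Prop :=
  (Set.range fun w : List C => contAfter W w).Finite

/-- The prefix preorder of `W` is well-founded:
every nonempty chain contains a minimal element. -/
def PrefWellFounded {C : Type} (W : Set (ℕ → C)) : Prop :=
  ∀ S : Set (List C), S.Nonempty →
    (∀ w₁ ∈ S, ∀ w₂ ∈ S, PrefComparable W w₁ w₂) →
    ∃ w₀ ∈ S, ∀ w ∈ S, ¬ prefLt W w w₀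

/-- Chromatic memory structure. -/
structure MemStruct (C : Type) where
  M : Type
  init : M
  upd : M → C → M

/-- Extension of the update function to finite words. -/
def MemStruct.updStar {C : Type} (N : MemStruct C) (m : N.M) (w : List C) : N.M :=
  w.foldl N.upd m

/-- The trivial one-state memory structure. -/
def trivMem (C : Type) : MemStruct C :=
  ⟨Unit, (), fun _ _ => ()⟩

/-- `W` is `N`-strongly-monotone. -/
def StronglyMonotone {C : Type} (N : MemStruct C) (W : Set (ℕ → C)) : Prop :=
  ∀ w₁ w₂ : List C,
    N.updStar N.init w₁ = N.updStar N.init w₂ → PrefComparable W w₁ w₂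

/-- `W` is `N`-progress-consistent. -/
def ProgressConsistent {C : Type} [Nonempty C] (N : MemStruct C) (W : Set (ℕ → C)) : Prop :=
  ∀ (m : N.M) (w₁ w₂ : List C),
    N.updStar N.init w₁ = m → N.updStar m w₂ = m →
    prefLt W w₁ (w₁ ++ w₂) → wcat w₁ (wpow w₂) ∈ W

/-- Two-player arena with colored edges; Player-1 vertices have outgoing edges
(so that strategies of Player 1 exist). -/
structure Arena (C : Type) where
  V : Type
  P1 : V → Prop
  E : Set (V × C × V)
  succ : ∀ v : V, P1 v → ∃ e ∈ E, e.1 = v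

namespace Arena

/-- Valid histories starting at a given vertex. -/
def HistFrom {C : Type} (A : Arena C) : A.V → List (A.V × C × A.V) → Prop
  | _, [] => True
  | v, e :: l => e ∈ A.E ∧ e.1 = v ∧ HistFrom A e.2.2 l

/-- Endpoint of a history. -/
def endFrom {C : Type} (A : Arena C) : A.V → List (A.V × C × A.V) → A.V
  | v, [] => v
  | _, e :: l => endFrom A e.2.2 l

/-- Infinite plays from a vertex. -/
def PlayFrom {C : Type} (A : Arena C) (v : A.V) (π : ℕ → A.V × C × A.V) : Prop :=
  (π 0).1 = v ∧ ∀ n : ℕ, π n ∈ A.E ∧ (π n).2.2 = (π (n + 1)).1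

/-- Colors along a play. -/
def playCol {C V : Type} (π : ℕ → V × C × V) : ℕ → C :=
  fun n => (π n).2.1

/-- Strategies of Player 1: on every valid history ending in a Player-1 vertex,
the strategy picks an edge leaving that vertex. -/
structure Strategy {C : Type} (A : Arena C) where
  next : A.V → List (A.V × C × A.V) → A.V × C × A.V
  legal : ∀ (v : A.V) (l : List (A.V × C × A.V)),
    A.HistFrom v l → A.P1 (A.endFrom v l) →
      next v l ∈ A.E ∧ (next v l).1 = A.endFrom v l

/-- A play from `v` is consistent with the strategy `σ`. -/
def Strategy.Consistent {C : Type} {A : Arena C} (σ : A.Strategy) (v : A.V)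
    (π : ℕ → A.V × C × A.V) : Prop :=
  ∀ n : ℕ, A.P1 (A.endFrom v (List.ofFn fun i : Fin n => π i)) →
    π n = σ.next v (List.ofFn fun i : Fin n => π i)

/-- `σ` is winning from `v` for the objective `W`. -/
def Strategy.WinningFrom {C : Type} {A : Arena C} (σ : A.Strategy)
    (W : Set (ℕ → C)) (v : A.V) : Prop :=
  ∀ π : ℕ → A.V × C × A.V, A.PlayFrom v π → σ.Consistent v π → playCol π ∈ W

/-- `σ` is optimal in `(A, W)`: winning from every vertex from which
Player 1 has some winning strategy. -/
def Strategy.Optimal {C : Type} {A : Arena C} (σ : A.Strategy) (W : Set (ℕ → C)) : Prop :=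
  ∀ v : A.V, (∃ σ' : A.Strategy, σ'.WinningFrom W v) → σ.WinningFrom W v

/-- `σ` is based on the memory structure `N`. -/
def Strategy.BasedOn {C : Type} {A : Arena C} (σ : A.Strategy) (N : MemStruct C) : Prop :=
  ∃ nxt : A.V → N.M → A.V × C × A.V,
    ∀ (v : A.V) (l : List (A.V × C × A.V)),
      A.HistFrom v l → A.P1 (A.endFrom v l) →
        σ.next v l = nxt (A.endFrom v l) (N.updStar N.init (l.map fun e => e.2.1))

/-- Finite arena: finitely many vertices and edges. -/
def IsFinite {C : Type} (A : Arena C) : Prop := Finite A.V ∧ A.E.Finite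

/-- Finitely branching arena. -/
def FinBranching {C : Type} (A : Arena C) : Prop :=
  ∀ v : A.V, {e ∈ A.E | e.1 = v}.Finite

/-- One-player arena of Player 1. -/
def OneP1 {C : Type} (A : Arena C) : Prop := ∀ v : A.V, A.P1 v

end Arena

/-- `N` suffices to play optimally for `W` in all arenas of the class `P`. -/
def SufficesIn {C : Type} (N : MemStruct C) (W : Set (ℕ → C))
    (P : Arena C → Prop) : Prop :=
  ∀ A : Arena C, P A → ∃ σ : A.Strategy, σ.BasedOn N ∧ σ.Optimal W

/-- Deterministic automaton (with complete transition function). -/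
structure DetAuto (C : Type) where
  Q : Type
  init : Q
  δ : Q → C → Q
  F : Set Q

/-- Extension of the transition function to finite words. -/
def DetAuto.δStar {C : Type} (D : DetAuto C) (q : D.Q) (w : List C) : D.Q :=
  w.foldl D.δ q

/-- Language recognized by `D`. -/
def DetAuto.lang {C : Type} (D : DetAuto C) : Set (List C) :=
  {w | D.δStar D.init w ∈ D.F}

/-- Prefix preorder extended to automaton states. -/
def statePrefLe {C : Type} (D : DetAuto C) (W : Set (ℕ → C)) (q₁ q₂ : D.Q) : Prop :=
  ∀ w₁ w₂ : List C,
    D.δStar D.init w₁ = q₁ → D.δStar D.init w₂ = q₂ → prefLe W w₁ w₂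

def statePrefLt {C : Type} (D : DetAuto C) (W : Set (ℕ → C)) (q₁ q₂ : D.Q) : Prop :=
  statePrefLe D W q₁ q₂ ∧ ¬ statePrefLe D W q₂ q₁

def StateComparable {C : Type} (D : DetAuto C) (W : Set (ℕ → C)) (q₁ q₂ : D.Q) : Prop :=
  statePrefLe D W q₁ q₂ ∨ statePrefLe D W q₂ q₁

/-- Monotone decomposition of `D` with `k` sets. -/
def MonotoneDecomposition {C : Type} (D : DetAuto C) (W : Set (ℕ → C))
    {k : ℕ} (Γ : Fin k → Set D.Q) : Prop :=
  (∀ q : D.Q, ∃ i : Fin k, q ∈ Γ i) ∧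
  (∀ (c : C) (i : Fin k), ∃ j : Fin k, (fun q => D.δ q c) '' Γ i ⊆ Γ j) ∧
  (∀ i : Fin k, ∀ q₁ ∈ Γ i, ∀ q₂ ∈ Γ i, StateComparable D W q₁ q₂)

end RegularMemory

/-!
Sufficiency: Player 1 plays an attractor strategy on configurations (vertex, residual `w⁻¹W`),
not for the actual history but for the `⪯_W`-least word that has the current memory state and
is winnable from the current vertex; strong monotonicity makes these words a chain and
finiteness of the classes gives a least one, so the memory state suffices. Along a losing play
the least words strictly drop only finitely often, since two drops with equal memory state and
equal residuals close a progressing loop, and by progress-consistency iterating that loop reaches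
the objective; afterwards the attractor rank would decrease forever.

Necessity: in an arena whose only choice is at one hub, two incomparable words with the same
memory state, or a progressing memory loop that never wins, make a memory-based strategy lose
from a vertex that Player 1 wins.
-/

namespace RegularMemory

section Words

variable {α : Type}

def pref (x : ℕ → α) (n : ℕ) : List α := List.ofFn fun i : Fin n => x i

@[simp] lemma pref_zero (x : ℕ → α) : pref x 0 = [] := rfl

@[simp] lemma length_pref (x : ℕ → α) (n : ℕ) : (pref x n).length = n := List.length_ofFn

@[simp] lemma getElem_pref (x : ℕ → α) (n i : ℕ) (h : i < (pref x n).length) :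
    (pref x n)[i] = x i := List.getElem_ofFn ..

lemma pref_succ (x : ℕ → α) (n : ℕ) : pref x (n + 1) = pref x n ++ [x n] := by
  rw [pref, List.ofFn_succ', List.concat_eq_append]; rfl

lemma map_pref {β : Type} (f : α → β) (x : ℕ → α) (n : ℕ) :
    (pref x n).map f = pref (f ∘ x) n := List.map_ofFn ..

lemma wcat_of_lt {w : List α} {x : ℕ → α} {n : ℕ} (h : n < w.length) : wcat w x n = w[n] :=
  dif_pos h

lemma wcat_of_le {w : List α} {x : ℕ → α} {n : ℕ} (h : w.length ≤ n) :
    wcat w x n = x (n - w.length) :=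
  dif_neg h.not_gt

@[simp] lemma wcat_nil (x : ℕ → α) : wcat [] x = x := rfl

lemma wcat_append (u w : List α) (x : ℕ → α) : wcat (u ++ w) x = wcat u (wcat w x) := by
  funext n
  by_cases h₁ : n < u.length
  · rw [wcat_of_lt (by simp; omega), wcat_of_lt h₁, List.getElem_append_left h₁]
  rw [wcat_of_le (not_lt.1 h₁)]
  by_cases h₂ : n - u.length < w.length
  · rw [wcat_of_lt (by simp; omega), wcat_of_lt h₂, List.getElem_append_right (by omega)]
  · rw [wcat_of_le (by simp; omega), wcat_of_le (by omega), List.length_append, Nat.sub_add_eq]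

lemma wcat_cons (c : α) (u : List α) (x : ℕ → α) : wcat (c :: u) x = wcat [c] (wcat u x) :=
  wcat_append [c] u x

lemma wcat_pref_shift (x : ℕ → α) (n : ℕ) : wcat (pref x n) (fun i => x (n + i)) = x := by
  funext i
  by_cases h : i < n
  · rw [wcat_of_lt (by simpa using h), getElem_pref]
  · rw [wcat_of_le (by simp; omega), length_pref, Nat.add_sub_cancel' (by omega)]

lemma wcat_singleton_shift (x : ℕ → α) : wcat [x 0] (fun i => x (i + 1)) = x := by
  simpa [pref, add_comm] using wcat_pref_shift x 1

lemma pref_wcat_of_le {u : List α} {y : ℕ → α} {n : ℕ} (h : n ≤ u.length) :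
    pref (wcat u y) n = u.take n :=
  List.ext_getElem (by simp; omega) fun i h₁ _ => by
    rw [getElem_pref, List.getElem_take, wcat_of_lt (by simp at h₁; omega)]

lemma eq_of_forall_wcat_pref {x y : ℕ → α} (h : ∀ n, ∃ z, wcat (pref x n) z = y) : x = y := by
  funext n
  obtain ⟨z, hz⟩ := h (n + 1)
  rw [← hz, wcat_of_lt (by simp), getElem_pref]

lemma wcat_wpow_self [Nonempty α] {u : List α} (hu : u ≠ []) : wcat u (wpow u) = wpow u := by
  obtain ⟨a, l, rfl⟩ := List.exists_cons_of_ne_nil hu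
  funext n
  by_cases h : n < (a :: l).length
  · rw [wcat_of_lt h]; simp only [wpow, List.get_eq_getElem, Nat.mod_eq_of_lt h]
  · rw [wcat_of_le (not_lt.1 h)]
    have hmod : (n - (a :: l).length) % (a :: l).length = n % (a :: l).length := by
      conv_rhs => rw [← Nat.sub_add_cancel (not_lt.1 h)]
      exact (Nat.add_mod_right _ _).symm
    simp only [wpow, List.get_eq_getElem, hmod]

lemma wcat_flatten_replicate_wpow [Nonempty α] {u : List α} (hu : u ≠ []) (k : ℕ) :
    wcat (List.replicate k u).flatten (wpow u) = wpow u := by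
  induction k with
  | zero => rfl
  | succ k ih => rw [List.replicate_succ, List.flatten_cons, wcat_append, ih, wcat_wpow_self hu]

lemma pref_add (x : ℕ → α) (a b : ℕ) : pref x (a + b) = pref x a ++ pref (fun i => x (a + i)) b :=
  List.ext_getElem (by simp) fun i _ _ => by
    by_cases h : i < a
    · rw [List.getElem_append_left (by simpa using h)]; simp
    · rw [List.getElem_append_right (by simp; omega)]; simp [Nat.add_sub_cancel' (not_lt.1 h)]

end Words

section Residuals

variable {C : Type}

@[simp] lemma contAfter_univ (u : List C) : contAfter (Set.univ : Set (ℕ → C)) u = Set.univ :=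
  Set.eq_univ_of_forall fun _ => trivial

lemma contAfter_append (S : Set (ℕ → C)) (u w : List C) :
    contAfter S (u ++ w) = contAfter (contAfter S u) w := by
  ext x; simp [contAfter, wcat_append]

lemma contAfter_mono {S S' : Set (ℕ → C)} (h : S ⊆ S') (u : List C) :
    contAfter S u ⊆ contAfter S' u :=
  fun _ hx => h hx

lemma prefLe.append_right {W : Set (ℕ → C)} {u v : List C} (h : prefLe W u v) (s : List C) :
    prefLe W (u ++ s) (v ++ s) := by
  rw [prefLe, contAfter_append, contAfter_append]
  exact contAfter_mono h s

lemma contAfter_flatten_replicate {S : Set (ℕ → C)} {u : List C} (h : contAfter S u = S) (k : ℕ) :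
    contAfter S (List.replicate k u).flatten = S := by
  induction k with
  | zero => rfl
  | succ k ih => rw [List.replicate_succ, List.flatten_cons, contAfter_append, h, ih]

lemma mem_of_contAfter_pref_eq_univ {W : Set (ℕ → C)} {x : ℕ → C} {n : ℕ}
    (h : contAfter W (pref x n) = Set.univ) : x ∈ W := by
  have hshift : (fun i => x (n + i)) ∈ contAfter W (pref x n) := by rw [h]; trivial
  rw [← wcat_pref_shift x n]
  exact hshift

lemma exists_contAfter_pref_eq_univ {A₀ : Set (List C)} {x : ℕ → C} (hx : x ∈ ReachObj A₀) :
    ∃ n, contAfter (ReachObj A₀) (pref x n) = Set.univ := by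
  obtain ⟨n, hn⟩ := hx
  refine ⟨n, Set.eq_univ_of_forall fun y => ⟨n, ?_⟩⟩
  change pref (wcat (pref x n) y) n ∈ A₀
  rwa [pref_wcat_of_le (by simp), List.take_of_length_le (by simp)]

/-- By progress-consistency `w u^ω` is winning, so some `w u^k` already has all continuations
winning, and `q ⊇ (w u^k)⁻¹W`. -/
lemma eq_univ_of_progress_loop [Nonempty C] {N : MemStruct C} {A₀ : Set (List C)}
    (hPC : ProgressConsistent N (ReachObj A₀)) {w u : List C}
    (hloop : N.updStar (N.updStar N.init w) u = N.updStar N.init w)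
    (hprog : prefLt (ReachObj A₀) w (w ++ u)) {q : Set (ℕ → C)}
    (hq : contAfter (ReachObj A₀) w ⊆ q) (hqloop : contAfter q u = q) : q = Set.univ := by
  have hu : u ≠ [] := by
    rintro rfl
    exact hprog.2 (by simpa using hprog.1)
  obtain ⟨n, hn⟩ := exists_contAfter_pref_eq_univ (hPC _ w u rfl hloop hprog)
  set R := (List.replicate n u).flatten
  have hR : n ≤ (w ++ R).length := by
    simpa [R] using Nat.le_add_left_of_le (Nat.le_mul_of_pos_right n (List.length_pos_iff.2 hu))
  have hwR : contAfter (ReachObj A₀) (w ++ R) = Set.univ := by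
    rw [← List.take_append_drop n (w ++ R), contAfter_append, ← pref_wcat_of_le hR (y := wpow u),
      wcat_append, wcat_flatten_replicate_wpow hu, hn, contAfter_univ]
  refine Set.eq_univ_of_univ_subset ?_
  calc Set.univ = contAfter (contAfter (ReachObj A₀) w) R := by rw [← contAfter_append, hwR]
    _ ⊆ contAfter q R := contAfter_mono hq R
    _ = q := contAfter_flatten_replicate hqloop n

lemma exists_prefLe_least {W : Set (ℕ → C)} (hreg : FinClasses W)
    {S : Set (List C)} (hS : S.Nonempty) (hchain : ∀ w₁ ∈ S, ∀ w₂ ∈ S, PrefComparable W w₁ w₂) :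
    ∃ w₀ ∈ S, ∀ w ∈ S, prefLe W w₀ w := by
  obtain ⟨w₀, hw₀, hmin⟩ := Set.Finite.exists_minimalFor' (contAfter W) S
    (hreg.subset (Set.image_subset_range _ _)) hS
  exact ⟨w₀, hw₀, fun w hw => (hchain w₀ hw₀ w hw).elim id fun h => hmin hw h⟩

lemma prefLe_of_chain {W : Set (ℕ → C)} {x : ℕ → C} {w : ℕ → List C}
    (hstep : ∀ n, prefLe W (w (n + 1)) (w n ++ [x n])) (a j : ℕ) :
    prefLe W (w (a + j)) (w a ++ pref (fun i => x (a + i)) j) := by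
  induction j with
  | zero => simp [prefLe]
  | succ j ih =>
    rw [pref_succ, ← List.append_assoc, ← add_assoc]
    exact Set.Subset.trans (hstep _) (ih.append_right _)

lemma prefLt_of_chain {W : Set (ℕ → C)} {x : ℕ → C} {w : ℕ → List C}
    (hstep : ∀ n, prefLe W (w (n + 1)) (w n ++ [x n])) {a j : ℕ}
    (hsame : contAfter W (w (a + j + 1)) = contAfter W (w a))
    (hdrop : ¬ prefLe W (w (a + j) ++ [x (a + j)]) (w (a + j + 1))) :
    prefLt W (w a) (w a ++ pref (fun i => x (a + i)) (j + 1)) := by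
  refine ⟨?_, fun hback => hdrop ?_⟩
  · rw [prefLe, ← hsame]
    exact prefLe_of_chain hstep a (j + 1)
  · have h := (prefLe_of_chain hstep a j).append_right [x (a + j)]
    rw [List.append_assoc, ← pref_succ] at h
    rw [prefLe, hsame]
    exact h.trans hback

end Residuals

section Memory

variable {C : Type} {N : MemStruct C}

lemma MemStruct.updStar_append (m : N.M) (u w : List C) :
    N.updStar m (u ++ w) = N.updStar (N.updStar m u) w :=
  List.foldl_append

lemma MemStruct.updStar_flatten_replicate {m : N.M} {u : List C} (h : N.updStar m u = m) (k : ℕ) :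
    N.updStar m (List.replicate k u).flatten = m := by
  induction k with
  | zero => rfl
  | succ k ih => rw [List.replicate_succ, List.flatten_cons, MemStruct.updStar_append, h, ih]

end Memory

section Drops

variable {C : Type} [Nonempty C] {N : MemStruct C} [Finite N.M] {A₀ : Set (List C)}

/-- Two strict drops with the same memory state and the same residuals would close a loop as in
`eq_univ_of_progress_loop`. -/
lemma finite_setOf_drop (hreg : FinClasses (ReachObj A₀)) (hPC : ProgressConsistent N (ReachObj A₀))
    {x : ℕ → C} (hx : x ∉ ReachObj A₀) {w : ℕ → List C}
    (hmem : ∀ n, N.updStar N.init (w n) = N.updStar N.init (pref x n))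
    (hle : ∀ n, prefLe (ReachObj A₀) (w n) (pref x n))
    (hstep : ∀ n, prefLe (ReachObj A₀) (w (n + 1)) (w n ++ [x n])) :
    {n | ¬ prefLe (ReachObj A₀) (w n ++ [x n]) (w (n + 1))}.Finite := by
  set W := ReachObj A₀
  by_contra hinf
  let f : ℕ → N.M × Set (ℕ → C) × Set (ℕ → C) := fun n =>
    (N.updStar N.init (pref x (n + 1)), contAfter W (w (n + 1)), contAfter W (pref x (n + 1)))
  obtain ⟨k, -, k', hk', hkk', hfk⟩ := Set.Infinite.exists_lt_map_eq_of_mapsTo hinf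
    (f := f) (t := Set.univ ×ˢ Set.range (contAfter W) ×ˢ Set.range (contAfter W))
    (fun n _ => ⟨trivial, ⟨_, rfl⟩, ⟨_, rfl⟩⟩) (Set.finite_univ.prod (hreg.prod hreg))
  simp only [f, Prod.mk.injEq] at hfk
  obtain ⟨hfm, hfw, hfq⟩ := hfk
  obtain ⟨j, rfl⟩ : ∃ j, k' = k + 1 + j := ⟨k' - k - 1, by omega⟩
  have hxu : pref x (k + 1 + j + 1) =
      pref x (k + 1) ++ pref (fun i => x (k + 1 + i)) (j + 1) :=
    pref_add x (k + 1) (j + 1)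
  refine hx (mem_of_contAfter_pref_eq_univ (eq_univ_of_progress_loop hPC ?_
    (prefLt_of_chain hstep hfw.symm hk') (hle (k + 1)) ?_))
  · rw [hmem, ← MemStruct.updStar_append, ← hxu, hfm]
  · rw [← contAfter_append, ← hxu, hfq]

end Drops

namespace Arena

variable {C : Type} {A : Arena C}

lemma endFrom_append_singleton (v : A.V) (l : List (A.V × C × A.V)) (e : A.V × C × A.V) :
    A.endFrom v (l ++ [e]) = e.2.2 := by
  induction l generalizing v with
  | nil => rfl
  | cons e' l ih => exact ih e'.2.2

lemma HistFrom.append_singleton {v : A.V} {l : List (A.V × C × A.V)} {e : A.V × C × A.V}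
    (h : A.HistFrom v l) (he : e ∈ A.E) (hsrc : e.1 = A.endFrom v l) :
    A.HistFrom v (l ++ [e]) := by
  induction l generalizing v with
  | nil => exact ⟨he, hsrc, trivial⟩
  | cons e' l ih => exact ⟨h.1, h.2.1, ih h.2.2 hsrc⟩

lemma PlayFrom.histFrom_pref {v : A.V} {π : ℕ → A.V × C × A.V} (hp : A.PlayFrom v π) (n : ℕ) :
    A.HistFrom v (pref π n) ∧ A.endFrom v (pref π n) = (π n).1 := by
  induction n with
  | zero => exact ⟨trivial, hp.1.symm⟩
  | succ n ih =>
    rw [pref_succ, endFrom_append_singleton, (hp.2 n).2]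
    exact ⟨ih.1.append_singleton (hp.2 n).1 ih.2.symm, rfl⟩

lemma map_pref_playCol (π : ℕ → A.V × C × A.V) (n : ℕ) :
    (pref π n).map (·.2.1) = pref (playCol π) n :=
  map_pref _ π n

theorem Strategy.exists_consistent_play (σ : A.Strategy) (v : A.V)
    (I : List (A.V × C × A.V) → Prop) (h0 : I [])
    (hstep : ∀ l, A.HistFrom v l → I l → ∃ e ∈ A.E, e.1 = A.endFrom v l ∧
      (A.P1 (A.endFrom v l) → e = σ.next v l) ∧ I (l ++ [e])) :
    ∃ π, A.PlayFrom v π ∧ σ.Consistent v π ∧ ∀ n, I (pref π n) := by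
  have : Nonempty (A.V × C × A.V) := let ⟨e, _⟩ := hstep [] trivial h0; ⟨e⟩
  choose! next hE hsrc hcons hI using hstep
  let hist : ℕ → List (A.V × C × A.V) := fun n => n.rec [] fun _ l => l ++ [next l]
  have hgood : ∀ n, A.HistFrom v (hist n) ∧ I (hist n) := by
    intro n
    induction n with
    | zero => exact ⟨trivial, h0⟩
    | succ n ih =>
      exact ⟨ih.1.append_singleton (hE _ ih.1 ih.2) (hsrc _ ih.1 ih.2), hI _ ih.1 ih.2⟩
  have hpref : ∀ n, pref (fun k => next (hist k)) n = hist n := by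
    intro n
    induction n with
    | zero => rfl
    | succ n ih => rw [pref_succ, ih]
  refine ⟨fun n => next (hist n), ⟨?_, fun n => ⟨hE _ (hgood n).1 (hgood n).2, ?_⟩⟩,
    fun n h1 => ?_, fun n => hpref n ▸ (hgood n).2⟩
  · exact hsrc [] trivial h0
  · rw [hsrc _ (hgood (n + 1)).1 (hgood (n + 1)).2]
    exact (endFrom_append_singleton _ _ _).symm
  · change A.P1 (A.endFrom v (pref (fun k => next (hist k)) n)) at h1
    change next (hist n) = σ.next v (pref (fun k => next (hist k)) n)
    rw [hpref] at h1 ⊢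
    exact hcons _ (hgood n).1 (hgood n).2 h1

theorem Strategy.consistent_play_invariant (σ : A.Strategy) {v : A.V}
    (I : List (A.V × C × A.V) → Prop) (h0 : I [])
    (hstep : ∀ l e, A.HistFrom v l → I l → e ∈ A.E → e.1 = A.endFrom v l →
      (A.P1 (A.endFrom v l) → e = σ.next v l) → I (l ++ [e]))
    {π : ℕ → A.V × C × A.V} (hplay : A.PlayFrom v π) (hcons : σ.Consistent v π) (n : ℕ) :
    I (pref π n) := by
  induction n with
  | zero => exact h0
  | succ n ih =>
    obtain ⟨hh, hend⟩ := hplay.histFrom_pref n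
    rw [pref_succ]
    exact hstep _ _ hh ih (hplay.2 n).1 hend.symm (hcons n)

theorem Strategy.winningFrom_iff_of_invariant (σ : A.Strategy) {v : A.V} (W : Set (ℕ → C))
    {y : ℕ → C} (I : List (A.V × C × A.V) → Prop)
    (hdead : ∀ u, ¬ A.P1 u → ∃ e ∈ A.E, e.1 = u) (h0 : I [])
    (hstep : ∀ l e, A.HistFrom v l → I l → e ∈ A.E → e.1 = A.endFrom v l →
      (A.P1 (A.endFrom v l) → e = σ.next v l) → I (l ++ [e]))
    (hy : ∀ l, I l → ∃ z, wcat (l.map (·.2.1)) z = y) :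
    σ.WinningFrom W v ↔ y ∈ W := by
  have hcol : ∀ π, A.PlayFrom v π → σ.Consistent v π → playCol π = y := fun π hp hc =>
    eq_of_forall_wcat_pref fun n => by
      rw [← map_pref_playCol]
      exact hy _ (σ.consistent_play_invariant I h0 hstep hp hc n)
  refine ⟨fun hwin => ?_, fun hy π hp hc => hcol π hp hc ▸ hy⟩
  obtain ⟨π, hp, hc, -⟩ := σ.exists_consistent_play v I h0 fun l hl hI => by
    by_cases h1 : A.P1 (A.endFrom v l)
    · obtain ⟨he, hsrc⟩ := σ.legal v l hl h1
      exact ⟨_, he, hsrc, fun _ => rfl, hstep _ _ hl hI he hsrc fun _ => rfl⟩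
    · obtain ⟨e, he, hsrc⟩ := hdead _ h1
      exact ⟨e, he, hsrc, fun h => absurd h h1, hstep _ _ hl hI he hsrc fun h => absurd h h1⟩
  exact hcol π hp hc ▸ hwin π hp hc

end Arena

open Arena

section Attractor

variable {C : Type} (A : Arena C)

/-- Attractor stages on configurations `(v, S)`, `S` the residual objective still to be met:
Player 1 can force `S` to become `univ` within stage `α`. -/
inductive AttrAt : Ordinal.{0} → A.V → Set (ℕ → C) → Prop
  | univ (α : Ordinal.{0}) (v : A.V) : AttrAt α v Set.univ
  | player1 {α β : Ordinal.{0}} {v : A.V} {S : Set (ℕ → C)} (e : A.V × C × A.V) :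
      A.P1 v → e ∈ A.E → e.1 = v → β < α → AttrAt β e.2.2 (contAfter S [e.2.1]) → AttrAt α v S
  | player2 {α : Ordinal.{0}} {v : A.V} {S : Set (ℕ → C)} (β : A.V × C × A.V → Ordinal.{0}) :
      ¬ A.P1 v → (∀ e ∈ A.E, e.1 = v → β e < α) →
      (∀ e ∈ A.E, e.1 = v → AttrAt (β e) e.2.2 (contAfter S [e.2.1])) → AttrAt α v S

def Attr (v : A.V) (S : Set (ℕ → C)) : Prop := ∃ α, AttrAt A α v S

noncomputable def attrRank (v : A.V) (S : Set (ℕ → C)) : Ordinal.{0} := sInf {α | AttrAt A α v S}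

variable {A}

lemma AttrAt.mono {α : Ordinal.{0}} {v : A.V} {S S' : Set (ℕ → C)} (h : AttrAt A α v S)
    (hS : S ⊆ S') : AttrAt A α v S' := by
  induction h generalizing S' with
  | univ α v => rw [Set.univ_subset_iff.1 hS]; exact .univ α v
  | player1 e h1 he hsrc hβ _ ih => exact .player1 e h1 he hsrc hβ (ih (contAfter_mono hS _))
  | player2 β h1 hβ _ ih =>
    exact .player2 β h1 hβ fun e he hsrc => ih e he hsrc (contAfter_mono hS _)

lemma Attr.mono {v : A.V} {S S' : Set (ℕ → C)} (h : Attr A v S) (hS : S ⊆ S') : Attr A v S' :=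
  let ⟨α, hα⟩ := h; ⟨α, hα.mono hS⟩

lemma attrAt_attrRank {v : A.V} {S : Set (ℕ → C)} (h : Attr A v S) :
    AttrAt A (attrRank A v S) v S :=
  csInf_mem h

lemma attrRank_le {α : Ordinal.{0}} {v : A.V} {S : Set (ℕ → C)} (h : AttrAt A α v S) :
    attrRank A v S ≤ α :=
  csInf_le' h

lemma attr_univ (v : A.V) : Attr A v (Set.univ : Set (ℕ → C)) := ⟨0, .univ 0 v⟩

lemma Attr.of_P1 {v : A.V} {S : Set (ℕ → C)} {e : A.V × C × A.V} (h1 : A.P1 v) (he : e ∈ A.E)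
    (hsrc : e.1 = v) (h : Attr A e.2.2 (contAfter S [e.2.1])) : Attr A v S :=
  let ⟨β, hβ⟩ := h; ⟨Order.succ β, .player1 e h1 he hsrc (Order.lt_succ β) hβ⟩

lemma Attr.of_not_P1 {v : A.V} {S : Set (ℕ → C)} (h1 : ¬ A.P1 v)
    (h : ∀ e ∈ A.E, e.1 = v → Attr A e.2.2 (contAfter S [e.2.1])) : Attr A v S := by
  classical
  let β : A.V × C × A.V → Ordinal.{0} := fun e =>
    if e ∈ A.E ∧ e.1 = v then attrRank A e.2.2 (contAfter S [e.2.1]) else 0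
  refine ⟨⨆ e, Order.succ (β e), .player2 β h1 (fun e _ _ => ?_) fun e he hsrc => ?_⟩
  · exact (Order.lt_succ _).trans_le (le_ciSup Ordinal.bddAbove_of_small e)
  · simp only [β, if_pos (And.intro he hsrc)]
    exact attrAt_attrRank (h e he hsrc)

lemma Attr.exists_attrRank_lt {v : A.V} {S : Set (ℕ → C)} (h : Attr A v S) (hS : S ≠ Set.univ)
    (h1 : A.P1 v) : ∃ e ∈ A.E, e.1 = v ∧ Attr A e.2.2 (contAfter S [e.2.1]) ∧
      attrRank A e.2.2 (contAfter S [e.2.1]) < attrRank A v S := by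
  rcases attrAt_attrRank h with _ | ⟨e, -, he, hsrc, hβ, hA⟩ | ⟨β, h1', -, -⟩
  · exact absurd rfl hS
  · exact ⟨e, he, hsrc, ⟨_, hA⟩, (attrRank_le hA).trans_lt hβ⟩
  · exact absurd h1 h1'

lemma Attr.attrRank_lt_of_not_P1 {v : A.V} {S : Set (ℕ → C)} (h : Attr A v S)
    (hS : S ≠ Set.univ) (h1 : ¬ A.P1 v) {e : A.V × C × A.V} (he : e ∈ A.E) (hsrc : e.1 = v) :
    Attr A e.2.2 (contAfter S [e.2.1]) ∧
      attrRank A e.2.2 (contAfter S [e.2.1]) < attrRank A v S := by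
  rcases attrAt_attrRank h with _ | ⟨e, h1', -⟩ | ⟨β, -, hβ, hA⟩
  · exact absurd rfl hS
  · exact absurd h1' h1
  · exact ⟨⟨_, hA e he hsrc⟩, (attrRank_le (hA e he hsrc)).trans_lt (hβ e he hsrc)⟩

open Classical in
noncomputable def attrMove [Nonempty C] (A : Arena C) (v : A.V) (S : Set (ℕ → C)) :
    A.V × C × A.V :=
  if h : ∃ e ∈ A.E, e.1 = v ∧ Attr A e.2.2 (contAfter S [e.2.1]) ∧
      attrRank A e.2.2 (contAfter S [e.2.1]) < attrRank A v S then h.choose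
  else if h1 : A.P1 v then (A.succ v h1).choose
  else (v, Classical.arbitrary C, v)

lemma attrMove_legal [Nonempty C] {v : A.V} (S : Set (ℕ → C)) (h1 : A.P1 v) :
    attrMove A v S ∈ A.E ∧ (attrMove A v S).1 = v := by
  unfold attrMove
  split_ifs with h
  · exact ⟨h.choose_spec.1, h.choose_spec.2.1⟩
  · exact (A.succ v h1).choose_spec

lemma Attr.attrMove_spec [Nonempty C] {v : A.V} {S : Set (ℕ → C)} (h : Attr A v S)
    (hS : S ≠ Set.univ) (h1 : A.P1 v) :
    Attr A (attrMove A v S).2.2 (contAfter S [(attrMove A v S).2.1]) ∧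
      attrRank A (attrMove A v S).2.2 (contAfter S [(attrMove A v S).2.1]) < attrRank A v S := by
  have hex := h.exists_attrRank_lt hS h1
  rw [attrMove, dif_pos hex]
  exact hex.choose_spec.2.2

end Attractor

section AttractorStrategy

variable {C : Type} (W : Set (ℕ → C)) (N : MemStruct C) (A : Arena C)

def WinnableWords (v : A.V) (m : N.M) : Set (List C) :=
  {w | N.updStar N.init w = m ∧ Attr A v (contAfter W w)}

open Classical in
noncomputable def leastWinnableWord (v : A.V) (m : N.M) : List C :=
  if h : ∃ w₀ ∈ WinnableWords W N A v m, ∀ w ∈ WinnableWords W N A v m, prefLe W w₀ w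
  then h.choose else []

/-- Plays for the least winnable word with the current memory state rather than for the actual
history, which is why the memory state is all it needs. -/
noncomputable def attrStrategy [Nonempty C] : A.Strategy where
  next v l := attrMove A (A.endFrom v l)
    (contAfter W (leastWinnableWord W N A (A.endFrom v l) (N.updStar N.init (l.map (·.2.1)))))
  legal _ _ _ h1 := attrMove_legal _ h1

lemma attrStrategy_basedOn [Nonempty C] : (attrStrategy W N A).BasedOn N :=
  ⟨fun v m => attrMove A v (contAfter W (leastWinnableWord W N A v m)), fun _ _ _ _ => rfl⟩

variable {W N A}

lemma leastWinnableWord_spec (hreg : FinClasses W) (hSM : StronglyMonotone N W) {v : A.V}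
    {m : N.M} (hne : (WinnableWords W N A v m).Nonempty) :
    leastWinnableWord W N A v m ∈ WinnableWords W N A v m ∧
      ∀ w ∈ WinnableWords W N A v m, prefLe W (leastWinnableWord W N A v m) w := by
  have h := exists_prefLe_least hreg hne fun w₁ h₁ w₂ h₂ => hSM w₁ w₂ (h₁.1.trans h₂.1.symm)
  rw [leastWinnableWord, dif_pos h]
  exact h.choose_spec

lemma attrStrategy_step [Nonempty C] (hreg : FinClasses W) (hSM : StronglyMonotone N W)
    {v : A.V} {π : ℕ → A.V × C × A.V} (hplay : A.PlayFrom v π)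
    (hcons : (attrStrategy W N A).Consistent v π) (hx : playCol π ∉ W) {n : ℕ}
    (hn : pref (playCol π) n ∈
      WinnableWords W N A (π n).1 (N.updStar N.init (pref (playCol π) n)))
    {w : List C}
    (hw : w = leastWinnableWord W N A (π n).1 (N.updStar N.init (pref (playCol π) n))) :
    Attr A (π (n + 1)).1 (contAfter W (w ++ [playCol π n])) ∧
      attrRank A (π (n + 1)).1 (contAfter W (w ++ [playCol π n])) <
        attrRank A (π n).1 (contAfter W w) := by
  obtain ⟨hwW, hwle⟩ := hw ▸ leastWinnableWord_spec hreg hSM ⟨_, hn⟩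
  have hS : contAfter W w ≠ Set.univ := by
    intro h
    refine hx (mem_of_contAfter_pref_eq_univ (n := n) (Set.univ_subset_iff.1 ?_))
    rw [← h]
    exact hwle _ hn
  rw [contAfter_append, ← (hplay.2 n).2]
  obtain ⟨-, hend⟩ := hplay.histFrom_pref n
  by_cases h1 : A.P1 (π n).1
  · have hπ : π n = attrMove A (π n).1 (contAfter W w) :=
      calc π n = (attrStrategy W N A).next v (pref π n) :=
            hcons n (show A.P1 (A.endFrom v (pref π n)) by rwa [hend])
        _ = _ := by simp only [attrStrategy, hend, map_pref_playCol, hw]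
    obtain ⟨hA, hlt⟩ := hwW.2.attrMove_spec hS h1
    rw [← hπ] at hA hlt
    exact ⟨hA, hlt⟩
  · exact hwW.2.attrRank_lt_of_not_P1 hS h1 (hplay.2 n).1 rfl

end AttractorStrategy

section Sufficiency

variable {C : Type} {N : MemStruct C} {A₀ : Set (List C)}

/-- Player 2 can keep the play outside the attractor, where the residual never becomes `univ`. -/
theorem attr_of_winningFrom {A : Arena C} {v : A.V} {σ : A.Strategy}
    (hσ : σ.WinningFrom (ReachObj A₀) v) : Attr A v (ReachObj A₀) := by
  by_contra hv
  let Out : List (A.V × C × A.V) → Prop := fun l =>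
    ¬ Attr A (A.endFrom v l) (contAfter (ReachObj A₀) (l.map (·.2.1)))
  have hescape : ∀ l, A.HistFrom v l → Out l → ∃ e ∈ A.E, e.1 = A.endFrom v l ∧
      (A.P1 (A.endFrom v l) → e = σ.next v l) ∧ Out (l ++ [e]) := by
    intro l hl hI
    simp only [Out, endFrom_append_singleton, List.map_append, contAfter_append]
    by_cases h1 : A.P1 (A.endFrom v l)
    · obtain ⟨he, hsrc⟩ := σ.legal v l hl h1
      exact ⟨_, he, hsrc, fun _ => rfl, fun hA => hI (.of_P1 h1 he hsrc hA)⟩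
    · by_contra hall
      exact hI (.of_not_P1 h1 fun e he hsrc => by_contra fun hA =>
        hall ⟨e, he, hsrc, fun h => absurd h h1, hA⟩)
  obtain ⟨π, hplay, hcons, hout⟩ := σ.exists_consistent_play v Out hv hescape
  obtain ⟨n, hn⟩ := exists_contAfter_pref_eq_univ (hσ π hplay hcons)
  exact hout n (by rw [map_pref_playCol, hn]; exact attr_univ _)

variable [Nonempty C]

/-- The least winnable words along a losing play of `attrStrategy` eventually stop dropping,
and from then on the attractor rank decreases forever. -/
theorem attrStrategy_winningFrom [Finite N.M] (hreg : FinClasses (ReachObj A₀))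
    (hSM : StronglyMonotone N (ReachObj A₀)) (hPC : ProgressConsistent N (ReachObj A₀))
    {A : Arena C} {v : A.V} (hv : Attr A v (ReachObj A₀)) :
    (attrStrategy (ReachObj A₀) N A).WinningFrom (ReachObj A₀) v := by
  set W := ReachObj A₀
  intro π hplay hcons
  by_contra hx
  set x := playCol π
  set w : ℕ → List C := fun n => leastWinnableWord W N A (π n).1 (N.updStar N.init (pref x n))
  have hwin : ∀ n, pref x n ∈ WinnableWords W N A (π n).1 (N.updStar N.init (pref x n)) := by
    intro n
    induction n with
    | zero => exact ⟨rfl, by rw [hplay.1]; exact hv⟩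
    | succ n ih =>
      refine ⟨rfl, ?_⟩
      rw [pref_succ]
      exact (attrStrategy_step hreg hSM hplay hcons hx ih rfl).1.mono
        (((leastWinnableWord_spec hreg hSM ⟨_, ih⟩).2 _ ih).append_right _)
  have hspec n := leastWinnableWord_spec hreg hSM ⟨_, hwin n⟩
  have hstep n := attrStrategy_step hreg hSM hplay hcons hx (hwin n) (w := w n) rfl
  have hchain : ∀ n, prefLe W (w (n + 1)) (w n ++ [x n]) := fun n =>
    (hspec (n + 1)).2 _ ⟨by rw [MemStruct.updStar_append, (hspec n).1.1, pref_succ,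
      MemStruct.updStar_append], (hstep n).1⟩
  obtain ⟨n₀, hn₀⟩ := (finite_setOf_drop hreg hPC hx (fun n => (hspec n).1.1)
    (fun n => (hspec n).2 _ (hwin n)) hchain).bddAbove
  refine not_strictAnti_of_wellFoundedLT
    (fun k => attrRank A (π (n₀ + 1 + k)).1 (contAfter W (w (n₀ + 1 + k))))
    (strictAnti_nat_of_succ_lt fun k => ?_)
  have hsame : contAfter W (w (n₀ + 1 + k + 1)) =
      contAfter W (w (n₀ + 1 + k) ++ [x (n₀ + 1 + k)]) :=
    (hchain _).antisymm (not_not.1 fun h => by have := hn₀ h; omega)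
  simp only [← add_assoc, hsame]
  exact (hstep _).2

theorem sufficesIn_of_stronglyMonotone_of_progressConsistent [Finite N.M]
    (hreg : FinClasses (ReachObj A₀)) (hSM : StronglyMonotone N (ReachObj A₀))
    (hPC : ProgressConsistent N (ReachObj A₀)) : SufficesIn N (ReachObj A₀) fun _ => True :=
  fun A _ => ⟨attrStrategy _ N A, attrStrategy_basedOn _ N A,
    fun _ ⟨_, hσ⟩ => attrStrategy_winningFrom hreg hSM hPC (attr_of_winningFrom hσ)⟩

end Sufficiency

section Gadget

variable {C : Type}

abbrev GadgetV (C : Type) := List C ⊕ (ℕ → C)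

/-- `inl u` spells out `u` and then reaches the hub `inl []`, `inr x` spells out `x` forever,
and at the hub Player 1 picks one of the moves in `H`. -/
inductive GadgetEdge (H : Set (C × GadgetV C)) : GadgetV C × C × GadgetV C → Prop
  | spell (c : C) (u : List C) : GadgetEdge H (.inl (c :: u), c, .inl u)
  | follow (x : ℕ → C) : GadgetEdge H (.inr x, x 0, .inr fun n => x (n + 1))
  | hub {m : C × GadgetV C} : m ∈ H → GadgetEdge H (.inl [], m)

@[reducible] def gadget (H : Set (C × GadgetV C)) (hH : H.Nonempty) : Arena C where
  V := GadgetV C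
  P1 v := v = .inl []
  E := {e | GadgetEdge H e}
  succ v hv := let ⟨m, hm⟩ := hH; ⟨(v, m), hv ▸ .hub hm, rfl⟩

def exitMove (x : ℕ → C) : C × GadgetV C := (x 0, .inr fun n => x (n + 1))

/-- The colours still to come from a vertex, when `F h` is what follows a visit of the hub
reached with colour history `h`. -/
def gadgetFuture (F : List C → ℕ → C) (h : List C) : GadgetV C → ℕ → C
  | .inl u => wcat u (F (h ++ u))
  | .inr x => x

def GoodMove (F : List C → ℕ → C) (R : Set (List C)) (h : List C) (m : C × GadgetV C) : Prop :=
  wcat [m.1] (gadgetFuture F (h ++ [m.1]) m.2) = F h ∧ ∀ u, m.2 = .inl u → h ++ m.1 :: u ∈ R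

lemma goodMove_exitMove {F : List C → ℕ → C} {R : Set (List C)} {h : List C} {x : ℕ → C}
    (hF : F h = x) : GoodMove F R h (exitMove x) :=
  ⟨hF ▸ wcat_singleton_shift x, fun _ h => nomatch h⟩

lemma goodMove_spell {F : List C → ℕ → C} {R : Set (List C)} {h : List C} {c : C} {u : List C}
    (hF : wcat (c :: u) (F (h ++ c :: u)) = F h) (hR : h ++ c :: u ∈ R) :
    GoodMove F R h (c, .inl u) := by
  refine ⟨?_, fun u' hu' => ?_⟩
  · rw [← hF, gadgetFuture, ← wcat_append]; simp
  · cases hu'; exact hR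

variable {H : Set (C × GadgetV C)} {hH : H.Nonempty}

lemma gadget_hub_move {e : GadgetV C × C × GadgetV C} (he : e ∈ (gadget H hH).E)
    (hsrc : e.1 = .inl []) : e.2 ∈ H := by
  rcases he with ⟨c, u⟩ | ⟨x⟩ | ⟨hm⟩
  · cases hsrc
  · cases hsrc
  · exact hm

lemma gadget_exists_hist_to_hub (w : List C) :
    ∃ l, (gadget H hH).HistFrom (.inl w) l ∧ (gadget H hH).endFrom (.inl w) l = .inl [] ∧
      l.map (·.2.1) = w := by
  induction w with
  | nil => exact ⟨[], trivial, rfl, rfl⟩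
  | cons c u ih =>
    obtain ⟨l, hl, hend, hcol⟩ := ih
    exact ⟨(.inl (c :: u), c, .inl u) :: l, ⟨.spell c u, rfl, hl⟩, hend, by simp [hcol]⟩

theorem gadget_winningFrom_iff (σ : (gadget H hH).Strategy) (W : Set (ℕ → C)) {w : List C}
    {R : Set (List C)} {F : List C → ℕ → C} (hw : w ∈ R)
    (hmove : ∀ l, (gadget H hH).HistFrom (.inl w) l → (gadget H hH).endFrom (.inl w) l = .inl [] →
      l.map (·.2.1) ∈ R → GoodMove F R (l.map (·.2.1)) (σ.next (.inl w) l).2) :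
    σ.WinningFrom W (.inl w) ↔ wcat w (F w) ∈ W := by
  refine σ.winningFrom_iff_of_invariant W (fun l =>
      wcat (l.map (·.2.1)) (gadgetFuture F (l.map (·.2.1)) ((gadget H hH).endFrom (.inl w) l)) =
        wcat w (F w) ∧
      ∀ u, (gadget H hH).endFrom (.inl w) l = .inl u → l.map (·.2.1) ++ u ∈ R)
    (fun v hv => ?_) ⟨rfl, fun u hu => by cases hu; exact hw⟩ (fun l e hl hI he hsrc hσ => ?_)
    fun l hl => ⟨_, hl.1⟩
  · rcases v with (_ | ⟨c, u⟩) | x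
    · exact absurd rfl hv
    · exact ⟨_, .spell c u, rfl⟩
    · exact ⟨_, .follow x, rfl⟩
  obtain ⟨hfut, hR⟩ := hI
  rw [List.map_append, endFrom_append_singleton]
  rcases he with ⟨c, u⟩ | ⟨x⟩ | ⟨hm⟩
  · rw [← hsrc] at hfut hR
    refine ⟨?_, fun u' hu' => ?_⟩
    · rw [← hfut]; simp [gadgetFuture, wcat_append, wcat_cons]
    · cases hu'; simpa using hR _ rfl
  · rw [← hsrc] at hfut
    refine ⟨?_, fun _ h => nomatch h⟩
    rw [← hfut, wcat_append]
    exact congrArg _ (wcat_singleton_shift x)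
  · rename_i m
    have hP1 : (gadget H hH).endFrom (.inl w) l = .inl [] := hsrc.symm
    have hlR : l.map (·.2.1) ∈ R := by simpa using hR [] hP1
    have hgood := hmove l hl hP1 hlR
    rw [← hσ hP1] at hgood
    rw [hP1] at hfut
    refine ⟨?_, fun u hu => by simpa using hgood.2 u hu⟩
    rw [← hfut, wcat_append]
    exact congrArg _ (by simpa [gadgetFuture] using hgood.1)

theorem gadget_winningFrom_iff_of_basedOn {N : MemStruct C} (σ : (gadget H hH).Strategy)
    {nxt : GadgetV C → N.M → GadgetV C × C × GadgetV C}
    (hnxt : ∀ v l, (gadget H hH).HistFrom v l → (gadget H hH).P1 ((gadget H hH).endFrom v l) →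
      σ.next v l = nxt ((gadget H hH).endFrom v l) (N.updStar N.init (l.map (·.2.1))))
    (W : Set (ℕ → C)) {w : List C} {R : Set (List C)} {F : List C → ℕ → C} {m : N.M}
    (hw : w ∈ R) (hR : ∀ h ∈ R, N.updStar N.init h = m)
    (hgood : ∀ h ∈ R, GoodMove F R h (nxt (.inl []) m).2) :
    σ.WinningFrom W (.inl w) ↔ wcat w (F w) ∈ W :=
  gadget_winningFrom_iff σ W hw fun l hl hend hlR => by
    rw [hnxt _ l hl hend, hend, hR _ hlR]
    exact hgood _ hlR

lemma gadget_nxt_hub_mem {N : MemStruct C} (σ : (gadget H hH).Strategy)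
    {nxt : GadgetV C → N.M → GadgetV C × C × GadgetV C}
    (hnxt : ∀ v l, (gadget H hH).HistFrom v l → (gadget H hH).P1 ((gadget H hH).endFrom v l) →
      σ.next v l = nxt ((gadget H hH).endFrom v l) (N.updStar N.init (l.map (·.2.1))))
    (w : List C) : (nxt (.inl []) (N.updStar N.init w)).2 ∈ H := by
  obtain ⟨l, hl, hend, hcol⟩ := gadget_exists_hist_to_hub (hH := hH) w
  have hlegal := σ.legal _ l hl hend
  rw [hnxt _ l hl hend, hend, hcol] at hlegal
  exact gadget_hub_move hlegal.1 hlegal.2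

def gadgetStrategy (f : List C → C × GadgetV C) (hf : ∀ h, f h ∈ H) :
    (gadget H hH).Strategy where
  next _ l := (.inl [], f (l.map (·.2.1)))
  legal _ _ _ hp := ⟨.hub (hf _), hp.symm⟩

theorem gadgetStrategy_winningFrom_iff (f : List C → C × GadgetV C) (hf : ∀ h, f h ∈ H)
    (W : Set (ℕ → C)) {w : List C} {R : Set (List C)} {F : List C → ℕ → C} (hw : w ∈ R)
    (hgood : ∀ h ∈ R, GoodMove F R h (f h)) :
    (gadgetStrategy (hH := hH) f hf).WinningFrom W (.inl w) ↔ wcat w (F w) ∈ W :=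
  gadget_winningFrom_iff _ W hw fun _ _ _ hlR => hgood _ hlR

lemma gadget_exists_winningFrom_exit {x : ℕ → C} (hx : exitMove x ∈ H) {W : Set (ℕ → C)}
    {w : List C} (hwx : wcat w x ∈ W) :
    ∃ σ : (gadget H hH).Strategy, σ.WinningFrom W (.inl w) :=
  ⟨gadgetStrategy (fun _ => exitMove x) fun _ => hx, (gadgetStrategy_winningFrom_iff _ _ W
    (R := {w}) (F := fun _ => x) rfl fun _ _ => goodMove_exitMove rfl).2 hwx⟩

lemma gadget_exists_winningFrom_loop_exit {c : C} {u : List C} {z : ℕ → C}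
    (hloop : (c, .inl u) ∈ H) (hexit : exitMove z ∈ H) {W : Set (ℕ → C)} {w : List C}
    (hwz : wcat (w ++ c :: u) z ∈ W) :
    ∃ σ : (gadget H hH).Strategy, σ.WinningFrom W (.inl w) := by
  let once : List C → C × GadgetV C := fun h =>
    if h.length < (w ++ c :: u).length then (c, .inl u) else exitMove z
  refine ⟨gadgetStrategy once fun h => ?_, (gadgetStrategy_winningFrom_iff once _ W
    (R := {w, w ++ c :: u}) (F := fun h => if h.length < (w ++ c :: u).length
      then wcat (c :: u) z else z) (Or.inl rfl) ?_).2 ?_⟩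
  · dsimp only [once]
    split_ifs
    exacts [hloop, hexit]
  · rintro h (rfl | rfl)
    · simp only [once, List.length_append, List.length_cons]
      rw [if_pos (by omega)]
      exact goodMove_spell (by simp) (Or.inr rfl)
    · simp only [once, lt_irrefl, if_false]
      exact goodMove_exitMove (by simp)
  · simpa [← wcat_append] using hwz

end Gadget

section Necessity

variable {C : Type} {N : MemStruct C} {W : Set (ℕ → C)}

/-- Two incomparable words with the same memory state lead to one hub from which either
word's own winning continuation can be taken; the memory cannot tell which one to take. -/
theorem stronglyMonotone_of_sufficesIn (hN : SufficesIn N W fun _ => True) :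
    StronglyMonotone N W := by
  intro wa wb hmem
  by_contra hcomp
  simp only [PrefComparable, prefLe, not_or, Set.not_subset] at hcomp
  obtain ⟨⟨xa, hxa, hxa'⟩, ⟨xb, hxb, hxb'⟩⟩ := hcomp
  let H : Set (C × GadgetV C) := {exitMove xa, exitMove xb}
  have hH : H.Nonempty := ⟨_, Or.inl rfl⟩
  obtain ⟨σ, ⟨nxt, hnxt⟩, hopt⟩ := hN (gadget H hH) trivial
  have hσ : ∀ x, (nxt (.inl []) (N.updStar N.init wa)).2 = exitMove x → ∀ w,
      N.updStar N.init w = N.updStar N.init wa → (σ.WinningFrom W (.inl w) ↔ wcat w x ∈ W) :=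
    fun x hx w hw => gadget_winningFrom_iff_of_basedOn σ hnxt W (R := {w}) (F := fun _ => x)
      (m := N.updStar N.init wa)
      rfl (by rintro _ rfl; exact hw) fun _ _ => hx ▸ goodMove_exitMove rfl
  obtain hx | hx : _ = exitMove xa ∨ _ = exitMove xb := gadget_nxt_hub_mem σ hnxt wa
  · exact hxa' ((hσ xa hx wb hmem.symm).1
      (hopt _ (gadget_exists_winningFrom_exit (Or.inr rfl) hxb)))
  · exact hxb' ((hσ xb hx wa rfl).1 (hopt _ (gadget_exists_winningFrom_exit (Or.inl rfl) hxa)))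

/-- After `w₁` the hub offers the loop `w₂` and an exit into a continuation `z` that wins after
`w₁ w₂` but not after `w₁`; a memory that is the same at every visit of the hub either exits at
once or loops forever. -/
theorem progressConsistent_of_sufficesIn [Nonempty C] (hN : SufficesIn N W fun _ => True) :
    ProgressConsistent N W := by
  intro m w₁ w₂ hm hloop hlt
  by_contra hloss
  obtain ⟨c, u, rfl⟩ : ∃ c u, w₂ = c :: u :=
    List.exists_cons_of_ne_nil fun h => hlt.2 (by simpa [h] using hlt.1)
  obtain ⟨z, hz, hz'⟩ := Set.not_subset.1 hlt.2
  let H : Set (C × GadgetV C) := {(c, .inl u), exitMove z}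
  have hH : H.Nonempty := ⟨_, Or.inl rfl⟩
  obtain ⟨σ, ⟨nxt, hnxt⟩, hopt⟩ := hN (gadget H hH) trivial
  have hwin : σ.WinningFrom W (.inl w₁) :=
    hopt _ (gadget_exists_winningFrom_loop_exit (Or.inl rfl) (Or.inr rfl) hz)
  subst hm
  obtain hmv | hmv : _ = ((c, .inl u) : C × GadgetV C) ∨ _ = exitMove z :=
    gadget_nxt_hub_mem σ hnxt w₁
  · refine hloss ((gadget_winningFrom_iff_of_basedOn σ hnxt W
      (R := Set.range fun k => w₁ ++ (List.replicate k (c :: u)).flatten)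
      (F := fun _ => wpow (c :: u)) (m := N.updStar N.init w₁) ⟨0, by simp⟩ ?_ ?_).1 hwin)
    · rintro _ ⟨k, rfl⟩
      rw [MemStruct.updStar_append, MemStruct.updStar_flatten_replicate hloop]
    · rintro _ ⟨k, rfl⟩
      rw [hmv]
      refine goodMove_spell (wcat_wpow_self (List.cons_ne_nil c u)) ⟨k + 1, ?_⟩
      simp [List.replicate_succ']
  · exact hz' ((gadget_winningFrom_iff_of_basedOn σ hnxt W (R := {w₁}) (F := fun _ => z)
      (m := N.updStar N.init w₁) rfl (by rintro _ rfl; rfl)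
      fun _ _ => hmv ▸ goodMove_exitMove rfl).1 hwin)

end Necessity

/-- characterization for regular reachability objectives: a finite
memory structure `N` suffices to play optimally for `W` in all arenas iff `W` is
`N`-strongly-monotone and `N`-progress-consistent. -/
theorem reachability_characterization {C : Type} [Nonempty C]
    (W : Set (ℕ → C))
    (hreach : ∃ A : Set (List C), W = ReachObj A)
    (hreg : FinClasses W)
    (N : MemStruct C) (hNfin : Finite N.M) :
    SufficesIn N W (fun _ => True) ↔
      StronglyMonotone N W ∧ ProgressConsistent N W := by
  obtain ⟨A₀, rfl⟩ := hreach
  exact ⟨fun h => ⟨stronglyMonotone_of_sufficesIn h, progressConsistent_of_sufficesIn h⟩,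
    fun h => sufficesIn_of_stronglyMonotone_of_progressConsistent hreg h.1 h.2⟩

end RegularMemory
end

section
/- Let D = (Q, C, q_init, δ, F) be a finite deterministic automaton with a single final state q_fin that is absorbing, let W = Reach(L(D)) be the derived regular reachability objective, and let M = (M, m_init, α_upd) be a chromatic memory structure. Then W is M-progress-consistent if and only if: for all m ∈ M and all q₁ ∈ Q, if L^M_{m_init→m} ∩ L^D_{q_init→q₁} ≠ ∅, then for all q₂ ∈ Q with q₂ ≠ q_fin and q₁ ≺ q₂, one has L^M_{m→m} ∩ L^D_{q₁→q₂} ∩ L^D_{q₂→q₂} = ∅. -/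
set_option autoImplicit false

/-!
With a single absorbing final state, the winning continuations of a prefix depend only on the
state `q` it leads to: they are the words driving `q` into `qfin`, and `≺` on prefixes is strict
inclusion of these sets. If `w₁ ≺ w₁w₂` with `w₂` a memory loop at `m`, the states
`q₁ = δ*(q_init, w₁)`, `δ*(q₁, w₂)`, `δ*(q₁, w₂²)`, … have increasing continuation sets, and since
`Q` is finite some `n` makes `q₂ = δ*(q₁, w₂ⁿ)` a fixed point of `w₂ⁿ`. Then `q₁ ≺ q₂`, and `w₂ⁿ`
loops on `m` and `q₂`; the condition forces `q₂ = qfin`, so `w₁(w₂)^ω` wins. Conversely, a loop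
`q₁ → q₂ → q₂` avoiding `qfin` keeps `w₁(w₂)^ω` out of `qfin` forever.
-/

namespace Function

theorem iterate_ne_of_apply_eq_fixedPt {α : Type*} {f : α → α} {a x y : α} (ha : f a = a)
    (hxy : f x = y) (hy : f y = y) (hya : y ≠ a) (k : ℕ) : f^[k] x ≠ a := by
  intro hk
  have hk' : f^[k + 1] x = a := by rw [iterate_succ_apply', hk, ha]
  rw [iterate_succ_apply, hxy, iterate_fixed hy] at hk'
  exact hya hk'

theorem exists_isPeriodicPt_iterate_self {α : Type*} [Finite α] (f : α → α) (x : α) :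
    ∃ n, 0 < n ∧ IsPeriodicPt f n (f^[n] x) := by
  obtain ⟨i, j, hij, he⟩ : ∃ i j, i < j ∧ f^[i] x = f^[j] x := by
    obtain ⟨i, j, hne, he⟩ := Finite.exists_ne_map_eq_of_infinite fun k => f^[k] x
    rcases hne.lt_or_gt with h | h
    exacts [⟨i, j, h, he⟩, ⟨j, i, h, he.symm⟩]
  have hper : IsPeriodicPt f (j - i) (f^[i] x) := by
    rw [IsPeriodicPt, IsFixedPt, ← iterate_add_apply,
      Nat.sub_add_cancel hij.le, he]
  refine ⟨(j - i) * (i + 1), Nat.mul_pos (by omega) i.succ_pos, ?_⟩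
  have hi : i ≤ (j - i) * (i + 1) := le_trans (Nat.le_succ i) (Nat.le_mul_of_pos_left _ (by omega))
  rw [← Nat.sub_add_cancel hi, iterate_add_apply, Nat.sub_add_cancel hi]
  exact (hper.apply_iterate _).mul_const _

end Function

theorem List.foldl_flatten_replicate {α β : Type*} (f : β → α → β) (b : β) (w : List α) (n : ℕ) :
    (List.replicate n w).flatten.foldl f b = (fun b => w.foldl f b)^[n] b := by
  induction n generalizing b with
  | zero => rfl
  | succ n ih => simp [List.replicate_succ, List.foldl_append, ih]

namespace RegularMemory

section Words

variable {C : Type}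

theorem ofFn_wcat (w : List C) (x : ℕ → C) (k : ℕ) :
    (List.ofFn fun i : Fin (w.length + k) => wcat w x i) = w ++ List.ofFn fun i : Fin k => x i := by
  rw [List.ofFn_add]
  congr 1
  · apply List.ext_getElem <;> simp [wcat]
  · simp [wcat]

theorem wcat_self_wpow [Nonempty C] {w : List C} (hw : w ≠ []) : wcat w (wpow w) = wpow w := by
  obtain ⟨a, l, rfl⟩ := List.exists_cons_of_ne_nil hw
  funext n
  simp only [wpow, wcat, List.get_eq_getElem]
  split_ifs with h
  · congr 1
    exact (Nat.mod_eq_of_lt h).symm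
  · congr 1
    exact (Nat.mod_eq_sub_mod (not_lt.1 h)).symm

theorem ofFn_wpow [Nonempty C] {w : List C} (hw : w ≠ []) (k : ℕ) :
    (List.ofFn fun i : Fin (k * w.length) => wpow w i) = (List.replicate k w).flatten := by
  induction k with
  | zero => simp
  | succ k ih =>
    rw [List.replicate_succ, List.flatten_cons, ← ih, ← ofFn_wcat, wcat_self_wpow hw]
    exact List.ofFn_congr (by ring) _

end Words

namespace DetAuto

variable {C : Type} {D : DetAuto C}

theorem δStar_append (q : D.Q) (u v : List C) :
    D.δStar q (u ++ v) = D.δStar (D.δStar q u) v :=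
  List.foldl_append

theorem δStar_flatten_replicate (q : D.Q) (w : List C) (n : ℕ) :
    D.δStar q (List.replicate n w).flatten = (fun q => D.δStar q w)^[n] q :=
  List.foldl_flatten_replicate _ _ _ _

/-- The paper's `q⁻¹W` for `W = Reach(L(D))` when `qfin` is the only, absorbing, final state. -/
def contFrom (D : DetAuto C) (qfin q : D.Q) : Set (ℕ → C) :=
  {x | ∃ n, D.δStar q (List.ofFn fun i : Fin n => x i) = qfin}

variable {qfin : D.Q}

theorem δStar_of_absorbing (habs : ∀ c, D.δ qfin c = qfin) (u : List C) :
    D.δStar qfin u = qfin := by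
  induction u with
  | nil => rfl
  | cons c u ih => simpa [DetAuto.δStar, habs] using ih

theorem δStar_ofFn_of_le (habs : ∀ c, D.δ qfin c = qfin) {q : D.Q} {x : ℕ → C} {n n' : ℕ}
    (hn : n ≤ n') (h : D.δStar q (List.ofFn fun i : Fin n => x i) = qfin) :
    D.δStar q (List.ofFn fun i : Fin n' => x i) = qfin := by
  obtain ⟨k, rfl⟩ := Nat.exists_eq_add_of_le hn
  rw [List.ofFn_add, δStar_append]
  exact (congrArg (D.δStar · _) h).trans (δStar_of_absorbing habs _)

theorem wcat_mem_contFrom_iff (habs : ∀ c, D.δ qfin c = qfin) (q : D.Q) (u : List C)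
    (x : ℕ → C) : wcat u x ∈ D.contFrom qfin q ↔ x ∈ D.contFrom qfin (D.δStar q u) := by
  constructor
  · rintro ⟨n, hn⟩
    refine ⟨n, ?_⟩
    rw [← δStar_append, ← ofFn_wcat]
    exact δStar_ofFn_of_le habs (Nat.le_add_left n u.length) hn
  · rintro ⟨n, hn⟩
    exact ⟨u.length + n, by rwa [ofFn_wcat, δStar_append]⟩

theorem contFrom_δStar_mono (habs : ∀ c, D.δ qfin c = qfin) {q q' : D.Q}
    (h : D.contFrom qfin q ⊆ D.contFrom qfin q') (u : List C) :
    D.contFrom qfin (D.δStar q u) ⊆ D.contFrom qfin (D.δStar q' u) := fun x hx =>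
  (wcat_mem_contFrom_iff habs q' u x).1 (h ((wcat_mem_contFrom_iff habs q u x).2 hx))

theorem monotone_contFrom_iterate (habs : ∀ c, D.δ qfin c = qfin) {q : D.Q} {w : List C}
    (h : D.contFrom qfin q ⊆ D.contFrom qfin (D.δStar q w)) :
    Monotone fun k => D.contFrom qfin ((fun q => D.δStar q w)^[k] q) := by
  refine monotone_nat_of_le_succ fun k => ?_
  induction k with
  | zero => exact h
  | succ k ih =>
    simp only [Function.iterate_succ_apply'] at ih ⊢
    exact contFrom_δStar_mono habs ih w

theorem wpow_mem_contFrom_iff [Nonempty C] (habs : ∀ c, D.δ qfin c = qfin) {w : List C}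
    (hw : w ≠ []) (q : D.Q) :
    wpow w ∈ D.contFrom qfin q ↔ ∃ k, (fun q => D.δStar q w)^[k] q = qfin := by
  have hlen : 0 < w.length := List.length_pos_iff.2 hw
  constructor
  · rintro ⟨n, hn⟩
    refine ⟨n, ?_⟩
    rw [← δStar_flatten_replicate, ← ofFn_wpow hw]
    exact δStar_ofFn_of_le habs (Nat.le_mul_of_pos_right n hlen) hn
  · rintro ⟨k, hk⟩
    exact ⟨k * w.length, by rwa [ofFn_wpow hw, δStar_flatten_replicate]⟩

theorem exists_ssubset_contFrom_iterate_isPeriodicPt [Finite D.Q] (habs : ∀ c, D.δ qfin c = qfin)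
    {q : D.Q} {w : List C} (h : D.contFrom qfin q ⊂ D.contFrom qfin (D.δStar q w)) :
    ∃ n, D.contFrom qfin q ⊂ D.contFrom qfin ((fun q => D.δStar q w)^[n] q) ∧
      Function.IsPeriodicPt (fun q => D.δStar q w) n ((fun q => D.δStar q w)^[n] q) := by
  obtain ⟨n, hn, hper⟩ := Function.exists_isPeriodicPt_iterate_self (fun q => D.δStar q w) q
  exact ⟨n, h.trans_subset (monotone_contFrom_iterate habs h.subset hn), hper⟩

theorem reachObj_lang_eq (hF : D.F = {qfin}) : ReachObj D.lang = D.contFrom qfin D.init := by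
  simp [ReachObj, DetAuto.lang, contFrom, hF]

theorem contAfter_reachObj_lang (hF : D.F = {qfin}) (habs : ∀ c, D.δ qfin c = qfin)
    (w : List C) : contAfter (ReachObj D.lang) w = D.contFrom qfin (D.δStar D.init w) := by
  ext x
  exact (reachObj_lang_eq hF ▸ wcat_mem_contFrom_iff habs D.init w x :)

theorem wcat_wpow_mem_reachObj_lang_iff [Nonempty C] (hF : D.F = {qfin})
    (habs : ∀ c, D.δ qfin c = qfin) (u : List C) {v : List C} (hv : v ≠ []) :
    wcat u (wpow v) ∈ ReachObj D.lang ↔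
      ∃ k, (fun q => D.δStar q v)^[k] (D.δStar D.init u) = qfin := by
  change wpow v ∈ contAfter (ReachObj D.lang) u ↔ _
  rw [contAfter_reachObj_lang hF habs, wpow_mem_contFrom_iff habs hv]

end DetAuto

section PrefixPreorder

variable {C : Type} {W : Set (ℕ → C)}

variable {D : DetAuto C} {g : D.Q → Set (ℕ → C)}

theorem prefLt_iff_of_contAfter_eq (hg : ∀ w, contAfter W w = g (D.δStar D.init w))
    (u v : List C) : prefLt W u v ↔ g (D.δStar D.init u) ⊂ g (D.δStar D.init v) := by
  rw [prefLt, prefLe, prefLe, hg, hg, Set.ssubset_def]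

theorem statePrefLe_iff_of_contAfter_eq (hg : ∀ w, contAfter W w = g (D.δStar D.init w))
    {u v : List C} {q₁ q₂ : D.Q} (hu : D.δStar D.init u = q₁) (hv : D.δStar D.init v = q₂) :
    statePrefLe D W q₁ q₂ ↔ g q₁ ⊆ g q₂ := by
  constructor
  · intro h
    simpa only [prefLe, hg, hu, hv] using h u v hu hv
  · rintro h u' v' rfl rfl
    rwa [prefLe, hg, hg]

theorem statePrefLt_iff_of_contAfter_eq (hg : ∀ w, contAfter W w = g (D.δStar D.init w))
    {u v : List C} {q₁ q₂ : D.Q} (hu : D.δStar D.init u = q₁) (hv : D.δStar D.init v = q₂) :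
    statePrefLt D W q₁ q₂ ↔ g q₁ ⊂ g q₂ := by
  rw [statePrefLt, statePrefLe_iff_of_contAfter_eq hg hu hv,
    statePrefLe_iff_of_contAfter_eq hg hv hu, Set.ssubset_def]

end PrefixPreorder

theorem progressConsistent_reformulation_general {C : Type} [Nonempty C]
    (D : DetAuto C) (hQfin : Finite D.Q) (qfin : D.Q)
    (hF : D.F = {qfin})
    (habs : ∀ c : C, D.δ qfin c = qfin)
    (N : MemStruct C) :
    ProgressConsistent N (ReachObj D.lang) ↔
      ∀ (m : N.M) (q₁ : D.Q),
        (∃ w : List C, N.updStar N.init w = m ∧ D.δStar D.init w = q₁) →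
        ∀ q₂ : D.Q, q₂ ≠ qfin → statePrefLt D (ReachObj D.lang) q₁ q₂ →
          ¬ ∃ w : List C,
              N.updStar m w = m ∧ D.δStar q₁ w = q₂ ∧ D.δStar q₂ w = q₂ := by
  have hcont := DetAuto.contAfter_reachObj_lang hF habs
  constructor
  · rintro hpc m _ ⟨w, rfl, rfl⟩ _ hq₂ hlt ⟨v, hvm, rfl, hloop⟩
    rw [statePrefLt_iff_of_contAfter_eq hcont rfl (DetAuto.δStar_append _ w v)] at hlt
    have hv : v ≠ [] := by
      rintro rfl
      exact hlt.ne rfl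
    obtain ⟨k, hk⟩ := (DetAuto.wcat_wpow_mem_reachObj_lang_iff hF habs w hv).1 <|
      hpc _ w v rfl hvm (by rwa [prefLt_iff_of_contAfter_eq hcont, DetAuto.δStar_append])
    exact Function.iterate_ne_of_apply_eq_fixedPt (DetAuto.δStar_of_absorbing habs v) rfl hloop
      hq₂ k hk
  · intro h m w₁ w₂ hm₁ hm₂ hlt
    by_contra hwin
    rw [prefLt_iff_of_contAfter_eq hcont, DetAuto.δStar_append] at hlt
    have hw₂ : w₂ ≠ [] := by
      rintro rfl
      exact hlt.ne rfl
    obtain ⟨n, hlt', hper⟩ := DetAuto.exists_ssubset_contFrom_iterate_isPeriodicPt habs hlt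
    have hne : (fun q => D.δStar q w₂)^[n] (D.δStar D.init w₁) ≠ qfin := fun hfin =>
      hwin ((DetAuto.wcat_wpow_mem_reachObj_lang_iff hF habs w₁ hw₂).2 ⟨n, hfin⟩)
    refine h m _ ⟨w₁, hm₁, rfl⟩ _ hne ?_ ⟨(List.replicate n w₂).flatten, ?_, ?_, ?_⟩
    · rwa [statePrefLt_iff_of_contAfter_eq hcont rfl
        (by rw [DetAuto.δStar_append, DetAuto.δStar_flatten_replicate])]
    · rw [MemStruct.updStar, List.foldl_flatten_replicate, Function.iterate_fixed hm₂]
    · exact DetAuto.δStar_flatten_replicate _ _ _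
    · rw [DetAuto.δStar_flatten_replicate]
      exact hper

/-- reformulation of progress-consistency for a regular reachability
objective given by a finite automaton `D` with a single absorbing final state. -/
theorem progressConsistent_reformulation {C : Type} [Nonempty C]
    (D : DetAuto C) (hQfin : Finite D.Q) (qfin : D.Q)
    (hF : D.F = {qfin})
    (habs : ∀ c : C, D.δ qfin c = qfin)
    (hreach : ∀ q : D.Q, ∃ w : List C, D.δStar D.init w = q)
    (N : MemStruct C) :
    ProgressConsistent N (ReachObj D.lang) ↔
      ∀ (m : N.M) (q₁ : D.Q),
        (∃ w : List C, N.updStar N.init w = m ∧ D.δStar D.init w = q₁) →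
        ∀ q₂ : D.Q, q₂ ≠ qfin → statePrefLt D (ReachObj D.lang) q₁ q₂ →
          ¬ ∃ w : List C,
              N.updStar m w = m ∧ D.δStar q₁ w = q₂ ∧ D.δStar q₂ w = q₂ :=
  progressConsistent_reformulation_general D hQfin qfin hF habs N

end RegularMemory
end
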